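/- Let H be a Hermitian matrix and β > 0. Define the free energy functional F(ρ) = tr(H·ρ) − S(ρ)/β where S(ρ) = −tr(ρ·log ρ) is the von Neumann entropy. Then for every density matrix ρ (positive semidefinite Hermitian with trace 1), F(ρ) ≥ F(ρ_H), where ρ_H = exp(−β·H)/tr(exp(−β·H)) is the Gibbs state. In particular F(ρ_H) = −(1/β)·log tr(exp(−β·H)). -/

import Mathlib

/-!
Diagonalise two states in their own eigenbases: if `ρ = Σ pᵢ |vᵢ⟩⟨vᵢ|` and
`σ = Σ qⱼ |uⱼ⟩⟨uⱼ|`, then `tr (ρ log σ) = Σⱼ (M p)ⱼ log qⱼ` with `Mⱼᵢ = |⟨uⱼ, vᵢ⟩|²` doubly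
stochastic, and summing the scalar inequality `x log y ≤ x log x + y - x` against `M` gives
Klein's inequality `tr (ρ log σ) ≤ tr (ρ log ρ) + tr σ - tr ρ`. For the Gibbs state
`log ρ_H = -βH - log Z` with `Z = tr e^{-βH}`, so for every density matrix `ρ`
`β (F(ρ) - F(ρ_H)) = tr (ρ log ρ) - tr (ρ log ρ_H) ≥ 0`, while `F(ρ_H) = -(log Z)/β` by direct
computation.
-/

open scoped ComplexOrder

/-- The von Neumann entropy `S(ρ) = −tr(ρ log ρ)` of a Hermitian matrix,
with the matrix logarithm defined by the Hermitian functional calculus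
(`Real.log 0 = 0` implements the convention `0·log 0 = 0`). -/
noncomputable def vnEntropy {n : ℕ} {ρ : Matrix (Fin n) (Fin n) ℂ}
    (hρ : ρ.IsHermitian) : ℝ :=
  -(ρ * hρ.cfc Real.log).trace.re

open Matrix Finset Real

theorem Real.mul_log_le_mul_log_add_sub {x y : ℝ} (hx : 0 ≤ x) (hy : 0 < y) :
    x * log y ≤ x * log x + y - x := by
  rcases hx.eq_or_lt with rfl | hx
  · simpa using hy.le
  have h := mul_le_mul_of_nonneg_left (log_le_sub_one_of_pos (div_pos hy hx)) hx.le
  rw [log_div hy.ne' hx.ne', mul_sub, mul_sub, mul_div_cancel₀ _ hx.ne', mul_one] at h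
  linarith

theorem sum_mulVec_mul_log_le_of_mem_doublyStochastic {ι : Type*} [Fintype ι] [DecidableEq ι]
    {M : Matrix ι ι ℝ} (hM : M ∈ doublyStochastic ℝ ι) {p q : ι → ℝ}
    (hp : ∀ i, 0 ≤ p i) (hq : ∀ j, 0 < q j) :
    ∑ j, (M *ᵥ p) j * log (q j) ≤ ∑ i, p i * log (p i) + ∑ j, q j - ∑ i, p i :=
  calc ∑ j, (M *ᵥ p) j * log (q j) = ∑ j, ∑ i, M j i * (p i * log (q j)) := by
        simp only [mulVec, dotProduct, sum_mul, mul_assoc]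
    _ ≤ ∑ j, ∑ i, M j i * (p i * log (p i) + q j - p i) := by
        gcongr with j _ i _
        · exact nonneg_of_mem_doublyStochastic hM
        · exact mul_log_le_mul_log_add_sub (hp i) (hq j)
    _ = ∑ j, ((M *ᵥ fun i ↦ p i * log (p i)) j + q j - (M *ᵥ p) j) := by
        refine sum_congr rfl fun j _ ↦ ?_
        simp only [mulVec, dotProduct, mul_add, mul_sub, sum_add_distrib, sum_sub_distrib,
          ← sum_mul, sum_row_of_mem_doublyStochastic hM, one_mul]
    _ = _ := by
        rw [sum_sub_distrib, sum_add_distrib, sum_mulVec_of_mem_doublyStochastic hM,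
          sum_mulVec_of_mem_doublyStochastic hM]

namespace Matrix

variable {𝕜 n : Type*} [RCLike 𝕜] [Fintype n] [DecidableEq n]

theorem of_norm_sq_mem_doublyStochastic {U : Matrix n n 𝕜} (hU : U ∈ unitaryGroup n 𝕜) :
    of (fun i j ↦ ‖U i j‖ ^ 2) ∈ doublyStochastic ℝ n := by
  refine mem_doublyStochastic_iff_sum.mpr ⟨fun i j ↦ sq_nonneg _, fun i ↦ ?_, fun j ↦ ?_⟩
  · have h := congr_fun₂ (mem_unitaryGroup_iff.mp hU) i i
    simp only [mul_apply, star_apply, RCLike.star_def, RCLike.mul_conj, one_apply_eq] at h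
    exact_mod_cast h
  · have h := congr_fun₂ (mem_unitaryGroup_iff'.mp hU) j j
    simp only [mul_apply, star_apply, RCLike.star_def, RCLike.conj_mul, one_apply_eq] at h
    exact_mod_cast h

namespace IsHermitian

variable {A B : Matrix n n 𝕜}

noncomputable def eigenOverlap (hA : A.IsHermitian) (hB : B.IsHermitian) : Matrix n n ℝ :=
  of fun j i ↦ ‖(star (hB.eigenvectorUnitary : Matrix n n 𝕜) * hA.eigenvectorUnitary) j i‖ ^ 2

theorem eigenOverlap_mem_doublyStochastic (hA : A.IsHermitian) (hB : B.IsHermitian) :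
    hA.eigenOverlap hB ∈ doublyStochastic ℝ n :=
  of_norm_sq_mem_doublyStochastic (star hB.eigenvectorUnitary * hA.eigenvectorUnitary).2

@[simp]
theorem eigenOverlap_self (hA : A.IsHermitian) : hA.eigenOverlap hA = 1 := by
  ext i j
  simp [eigenOverlap, one_apply, apply_ite]

theorem trace_cfc_mul_cfc (hA : A.IsHermitian) (hB : B.IsHermitian) (f g : ℝ → ℝ) :
    (hA.cfc f * hB.cfc g).trace =
      ((∑ j, (hA.eigenOverlap hB *ᵥ (f ∘ hA.eigenvalues)) j * g (hB.eigenvalues j) : ℝ) : 𝕜) := by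
  set W : Matrix n n 𝕜 := star (hB.eigenvectorUnitary : Matrix n n 𝕜) * hA.eigenvectorUnitary
  have h : (hA.cfc f * hB.cfc g).trace = (diagonal (RCLike.ofReal ∘ f ∘ hA.eigenvalues) *
      (star W * diagonal (RCLike.ofReal ∘ g ∘ hB.eigenvalues) * W)).trace := by
    simp only [IsHermitian.cfc, Unitary.conjStarAlgAut_apply, W, star_mul, star_star, mul_assoc]
    rw [trace_mul_comm]
    simp only [mul_assoc]
  have entry : ∀ i,
      (star W * diagonal (RCLike.ofReal ∘ g ∘ hB.eigenvalues) * W : Matrix n n 𝕜) i i =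
        ((∑ j, ‖W j i‖ ^ 2 * g (hB.eigenvalues j) : ℝ) : 𝕜) := by
    intro i
    rw [mul_apply]
    push_cast
    refine sum_congr rfl fun j _ ↦ ?_
    simp only [mul_diagonal, star_apply, RCLike.star_def, ← RCLike.conj_mul, Function.comp_apply]
    ring
  rw [h, trace]
  simp only [diag, diagonal_mul, entry, Function.comp_apply]
  push_cast [eigenOverlap, of_apply, mulVec, dotProduct, sum_mul, mul_sum]
  rw [sum_comm]
  refine sum_congr rfl fun i _ ↦ sum_congr rfl fun j _ ↦ ?_
  simp only [W, Function.comp_apply]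
  ring

theorem cfc_id (hA : A.IsHermitian) : hA.cfc id = A := by
  rw [← hA.cfc_eq, _root_.cfc_id ℝ A hA.isSelfAdjoint]

end IsHermitian

theorem PosSemidef.re_trace_mul_log_le {ρ σ : Matrix n n 𝕜} (hρ : ρ.PosSemidef) (hσ : σ.PosDef) :
    RCLike.re (ρ * hσ.isHermitian.cfc log).trace ≤
      RCLike.re (ρ * hρ.isHermitian.cfc log).trace + RCLike.re (σ.trace - ρ.trace) := by
  have hρσ := hρ.isHermitian.trace_cfc_mul_cfc hσ.isHermitian id log
  have hρρ := hρ.isHermitian.trace_cfc_mul_cfc hρ.isHermitian id log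
  rw [hρ.isHermitian.cfc_id] at hρσ hρρ
  rw [hρσ, hρρ, hρ.isHermitian.trace_eq_sum_eigenvalues, hσ.isHermitian.trace_eq_sum_eigenvalues]
  simp only [RCLike.ofReal_re, map_sub, map_sum, IsHermitian.eigenOverlap_self, one_mulVec,
    Function.id_comp]
  have := sum_mulVec_mul_log_le_of_mem_doublyStochastic
    (hρ.isHermitian.eigenOverlap_mem_doublyStochastic hσ.isHermitian)
    hρ.eigenvalues_nonneg hσ.eigenvalues_pos
  linarith

end Matrix

section Gibbs

open scoped Matrix.Norms.L2Operator MatrixOrder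

variable {n : Type*} [Fintype n] [DecidableEq n] {H : Matrix n n ℂ}

theorem Matrix.IsHermitian.posDef_exp (hH : H.IsHermitian) : (NormedSpace.exp H).PosDef :=
  isStrictlyPositive_iff_posDef.mp ((isUnit_exp H).isStrictlyPositive hH.isSelfAdjoint.exp_nonneg)

theorem Matrix.IsHermitian.re_trace_mul_log_gibbs (hH : H.IsHermitian) {β Z : ℝ} (hZ : 0 < Z)
    {ρH : Matrix n n ℂ} (hρH : ρH.IsHermitian)
    (hρHZ : ρH = Z⁻¹ • NormedSpace.exp ((-β : ℂ) • H)) (X : Matrix n n ℂ) :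
    (X * hρH.cfc Real.log).trace.re = -β * (H * X).trace.re - Real.log Z * X.trace.re := by
  have hβH : ((-β : ℂ) • H).IsHermitian := hH.smul (IsSelfAdjoint.neg (Complex.conj_ofReal β))
  have hlog : hρH.cfc Real.log = (-β : ℂ) • H - algebraMap ℝ _ (Real.log Z) := by
    rw [← hρH.cfc_eq, ← CFC.log, hρHZ,
      CFC.log_smul' _ (inv_pos.mpr hZ) hβH.posDef_exp.isStrictlyPositive,
      CFC.log_exp _ hβH.isSelfAdjoint, Real.log_inv, map_neg]
    abel
  simp [hlog, mul_sub, trace_sub, Algebra.algebraMap_eq_smul_one, trace_mul_comm X H]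

end Gibbs

/-- Gibbs variational principle: the Gibbs state `ρ_H = e^{−βH}/tr e^{−βH}` minimizes the
free energy functional `F(ρ) = tr(Hρ) − S(ρ)/β` over density matrices, and its free energy
equals `−(1/β) log tr(e^{−βH})`. -/
theorem stmt4 {n : ℕ} (H G ρH ρ : Matrix (Fin n) (Fin n) ℂ) (hH : H.IsHermitian)
    (β : ℝ) (hβ : 0 < β)
    (hG : G = NormedSpace.exp ((-β : ℂ) • H)) (hρHdef : ρH = G.trace⁻¹ • G)
    (hρH : ρH.IsHermitian)
    (hρ : ρ.PosSemidef) (hρtr : ρ.trace = 1) :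
    (H * ρH).trace.re - vnEntropy hρH / β ≤ (H * ρ).trace.re - vnEntropy hρ.1 / β ∧
      (H * ρH).trace.re - vnEntropy hρH / β = -(1 / β) * Real.log G.trace.re := by
  have : Nonempty (Fin n) := by
    rcases n with _ | m
    · simp [trace] at hρtr
    · exact ⟨0⟩
  have hGpos : G.PosDef := hG ▸ (hH.smul (IsSelfAdjoint.neg (Complex.conj_ofReal β))).posDef_exp
  obtain ⟨Z, hZ, hGtr⟩ : ∃ Z : ℝ, 0 < Z ∧ (Z : ℂ) = G.trace :=
    RCLike.pos_iff_exists_ofReal.mp hGpos.trace_pos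
  have hρHZ : ρH = Z⁻¹ • G := by
    rw [hρHdef, ← hGtr, ← Complex.ofReal_inv, Complex.coe_smul]
  have hρHtr : ρH.trace = 1 := by
    rw [hρHdef, trace_smul, ← hGtr, smul_eq_mul,
      inv_mul_cancel₀ (Complex.ofReal_ne_zero.mpr hZ.ne')]
  have htr := hH.re_trace_mul_log_gibbs hZ hρH (hG ▸ hρHZ)
  have hklein := hρ.re_trace_mul_log_le (hρHZ ▸ hGpos.smul (inv_pos.mpr hZ))
  simp only [RCLike.re_to_complex, hρtr, hρHtr, sub_self, Complex.zero_re, add_zero, htr,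
    Complex.one_re, mul_one] at hklein
  have hfree : (H * ρH).trace.re - vnEntropy hρH / β = -(1 / β) * Real.log Z := by
    rw [vnEntropy, htr, hρHtr, Complex.one_re]
    field_simp
    ring
  refine ⟨?_, by rw [hfree, ← hGtr, Complex.ofReal_re]⟩
  rw [hfree, vnEntropy]
  calc -(1 / β) * Real.log Z
      = (H * ρ).trace.re - -(-β * (H * ρ).trace.re - Real.log Z) / β := by field_simp; ring
    _ ≤ (H * ρ).trace.re - -(ρ * hρ.1.cfc Real.log).trace.re / β := by gcongr
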